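/- Let G be a k-regular finite simple graph on n vertices with k ≥ 1, let A_G be its adjacency matrix, and let τ := λ_min(A_G). Then Υ(A_G,𝟙) = n / (1 − k/τ), where 𝟙 is the all-ones vector. In particular, α(G) ≤ n / (1 − k/τ) (the Delsarte-Hoffman ratio bound). -/

import Mathlib

open scoped BigOperators Pointwise

variable {V : Type*} [Fintype V] [DecidableEq V]

/-- Inner product on `ℝ^V`. -/
def ip (w z : V → ℝ) : ℝ := ∑ i, w i * z i

/-- `κ` is a positive definite monotone gauge on the nonnegative orthant of `ℝ^V`. -/
def IsPDMGauge (κ : (V → ℝ) → ℝ) : Prop :=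
  κ 0 = 0 ∧
  (∀ w : V → ℝ, 0 ≤ w → 0 ≤ κ w) ∧
  (∀ (c : ℝ) (w : V → ℝ), 0 < c → 0 ≤ w → κ (c • w) = c * κ w) ∧
  (∀ w z : V → ℝ, 0 ≤ w → 0 ≤ z → κ (w + z) ≤ κ w + κ z) ∧
  (∀ w : V → ℝ, 0 ≤ w → w ≠ 0 → 0 < κ w) ∧
  (∀ w z : V → ℝ, 0 ≤ w → w ≤ z → κ w ≤ κ z)

/-- The dual gauge `κ∘(z) = sup{⟨w,z⟩ : w ≥ 0, κ(w) ≤ 1}`. -/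
noncomputable def dualGauge (κ : (V → ℝ) → ℝ) (z : V → ℝ) : ℝ :=
  sSup {r : ℝ | ∃ w : V → ℝ, 0 ≤ w ∧ κ w ≤ 1 ∧ r = ip w z}

/-- The antiblocker of a subset of the nonnegative orthant. -/
def abl (X : Set (V → ℝ)) : Set (V → ℝ) := {y | 0 ≤ y ∧ ∀ x ∈ X, ip x y ≤ 1}

/-- A convex corner: compact, convex, nonempty interior, subset of the nonnegative
orthant, and lower-comprehensive. -/
def IsConvexCorner (C : Set (V → ℝ)) : Prop :=
  IsCompact C ∧ Convex ℝ C ∧ (interior C).Nonempty ∧ (∀ x ∈ C, 0 ≤ x) ∧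
  ∀ x y : V → ℝ, 0 ≤ x → x ≤ y → y ∈ C → x ∈ C

/-- Minkowski functional of a set. -/
noncomputable def minkowski (C : Set (V → ℝ)) (x : V → ℝ) : ℝ :=
  sInf {μ : ℝ | 0 ≤ μ ∧ x ∈ μ • C}

/-- Support function of a set. -/
noncomputable def suppFn (C : Set (V → ℝ)) (y : V → ℝ) : ℝ :=
  sSup {r : ℝ | ∃ x ∈ C, r = ip x y}

/-- A stable (independent) set of vertices. -/
def IsStableSet (G : SimpleGraph V) (S : Finset V) : Prop :=
  ∀ i ∈ S, ∀ j ∈ S, ¬ G.Adj i j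

/-- Weighted stability number `α(G,w)`. -/
noncomputable def alphaW (G : SimpleGraph V) (w : V → ℝ) : ℝ :=
  sSup {r : ℝ | ∃ S : Finset V, IsStableSet G S ∧ r = ∑ i ∈ S, w i}

/-- Stability number `α(G)`. -/
noncomputable def stabilityNumber (G : SimpleGraph V) : ℕ :=
  sSup {n : ℕ | ∃ S : Finset V, IsStableSet G S ∧ S.card = n}

/-- Weighted fractional chromatic number `χ_f(G,w)`. -/
noncomputable def chiF (G : SimpleGraph V) (w : V → ℝ) : ℝ :=
  sInf {r : ℝ | ∃ y : Finset V → ℝ,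
    (∀ S, 0 ≤ y S) ∧ (∀ S, ¬ IsStableSet G S → y S = 0) ∧
    (∀ i, w i ≤ ∑ S : Finset V, (if i ∈ S then y S else 0)) ∧
    r = ∑ S : Finset V, y S}

/-- The stable set polytope `STAB(G)`. -/
def STABset (G : SimpleGraph V) : Set (V → ℝ) :=
  convexHull ℝ {x : V → ℝ | ∃ S : Finset V, IsStableSet G S ∧
    x = fun i => if i ∈ S then (1 : ℝ) else 0}

/-- The fractional stable set polytope `QSTAB(G)`. -/
def QSTABset (H : SimpleGraph V) : Set (V → ℝ) :=
  {x | 0 ≤ x ∧ ∀ K : Finset V, H.IsClique (↑K : Set V) → ∑ i ∈ K, x i ≤ 1}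

/-- The set of (real) eigenvalues of a matrix. -/
def spectrumSet (M : Matrix V V ℝ) : Set ℝ :=
  {t | ∃ x : V → ℝ, x ≠ 0 ∧ M.mulVec x = t • x}

/-- Largest eigenvalue. -/
noncomputable def lambdaMax (M : Matrix V V ℝ) : ℝ := sSup (spectrumSet M)

/-- Smallest eigenvalue. -/
noncomputable def lambdaMin (M : Matrix V V ℝ) : ℝ := sInf (spectrumSet M)

/-- Positive semidefinite square root (zero on non-PSD matrices). -/
noncomputable def psdSqrt (M : Matrix V V ℝ) : Matrix V V ℝ :=
  letI := Classical.dec M.PosSemidef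
  if h : M.PosSemidef then (h.1.eigenvectorUnitary : Matrix V V ℝ) *
    Matrix.diagonal (fun i => Real.sqrt (h.1.eigenvalues i)) *
    (star h.1.eigenvectorUnitary : Matrix V V ℝ) else 0

/-- `Â = A / (-λ_min(A))` for nonzero `A`, and `0̂ = 0`. -/
noncomputable def hatM (A : Matrix V V ℝ) : Matrix V V ℝ :=
  if A = 0 then 0 else (-(lambdaMin A))⁻¹ • A

/-- `A` is a generalized adjacency matrix of `G`: symmetric, with `A i j = 0`
whenever `i` and `j` are non-adjacent (in particular on the diagonal). -/
def IsGenAdj (G : SimpleGraph V) (A : Matrix V V ℝ) : Prop :=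
  A.IsSymm ∧ ∀ i j, ¬ G.Adj i j → A i j = 0

/-- Weighted Hoffman bound `H(A,w) = λ_max(W^{1/2}(I+Â)W^{1/2})`, `W = Diag w`. -/
noncomputable def hoffman (A : Matrix V V ℝ) (w : V → ℝ) : ℝ :=
  lambdaMax (psdSqrt (Matrix.diagonal w) * (1 + hatM A) * psdSqrt (Matrix.diagonal w))

/-- The feasible region `𝒰_A` of the SDP defining `Υ(A,·)`. -/
def Uset (A : Matrix V V ℝ) : Set (V → ℝ) :=
  {x | 0 ≤ x ∧ ((1 : Matrix V V ℝ) -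
    psdSqrt (1 + hatM A) * Matrix.diagonal x * psdSqrt (1 + hatM A)).PosSemidef}

/-- `Υ(A,w) = max{⟨w,x⟩ : x ≥ 0, (I+Â)^{1/2} Diag(x) (I+Â)^{1/2} ⪯ I}`. -/
noncomputable def upsilon (A : Matrix V V ℝ) (w : V → ℝ) : ℝ :=
  sSup {r : ℝ | ∃ x ∈ Uset A, r = ip w x}

/-- The diagonal of a matrix, as a vector. -/
def diagVec (M : Matrix V V ℝ) : V → ℝ := fun i => M i i

/-- The convex corner `ℋ_A`. -/
def Hset (A : Matrix V V ℝ) : Set (V → ℝ) :=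
  {x | 0 ≤ x ∧ ∃ Y : Matrix V V ℝ, Y.PosSemidef ∧ Y.trace ≤ 1 ∧
    ∀ i, x i ≤ diagVec (psdSqrt (1 + hatM A) * Y * psdSqrt (1 + hatM A)) i}

/-- Objective function of Luz's convex quadratic program:
`2⟨w,x⟩ − ⟨x, W^{1/2}(I+Â)W^{1/2} x⟩`. -/
noncomputable def luzObj (A : Matrix V V ℝ) (w x : V → ℝ) : ℝ :=
  2 * ip w x - ∑ i, x i *
    ((psdSqrt (Matrix.diagonal w) * (1 + hatM A) * psdSqrt (Matrix.diagonal w)).mulVec x) i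

/-- Luz's bound `ℓ(A,w)` as a real number (supremum of the CQP objective). -/
noncomputable def luz (A : Matrix V V ℝ) (w : V → ℝ) : ℝ :=
  sSup {r : ℝ | ∃ x : V → ℝ, 0 ≤ x ∧ r = luzObj A w x}

/-- Luz's bound `ℓ(A,w)` with values in `ℝ ∪ {±∞}`. -/
noncomputable def luzE (A : Matrix V V ℝ) (w : V → ℝ) : EReal :=
  sSup {r : EReal | ∃ x : V → ℝ, 0 ≤ x ∧ r = ((luzObj A w x : ℝ) : EReal)}

/-- The theta body `TH(G)`. -/
def THbody (G : SimpleGraph V) : Set (V → ℝ) :=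
  {x | 0 ≤ x ∧ ∃ X : Matrix V V ℝ, X.PosSemidef ∧ (∀ i, X i i = x i) ∧
    (∀ i j, G.Adj i j → X i j = 0) ∧
    (Matrix.fromBlocks (1 : Matrix Unit Unit ℝ) (Matrix.of fun _ j => x j)
      (Matrix.of fun i _ => x i) X).PosSemidef}

/-- Weighted Lovász theta number `θ(G,w)`. -/
noncomputable def thetaW (G : SimpleGraph V) (w : V → ℝ) : ℝ :=
  sSup {r : ℝ | ∃ x ∈ THbody G, r = ip w x}

section HoffmanAux

open Matrix Finset

lemma isHermitian_of_transpose {M : Matrix V V ℝ} (h : Mᵀ = M) : M.IsHermitian := by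
  rwa [Matrix.IsHermitian, Matrix.conjTranspose_eq_transpose_of_trivial]

lemma real_star_vec (x : V → ℝ) : star x = x := by
  funext i; simp

lemma posSemidef_of_quad (M : Matrix V V ℝ) (h1 : M.IsHermitian)
    (h2 : ∀ x : V → ℝ, 0 ≤ x ⬝ᵥ M *ᵥ x) : M.PosSemidef :=
  Matrix.PosSemidef.of_dotProduct_mulVec_nonneg h1 fun x => by rw [real_star_vec]; exact h2 x

lemma quad_nonneg_of_posSemidef {M : Matrix V V ℝ} (hM : M.PosSemidef) (x : V → ℝ) :
    0 ≤ x ⬝ᵥ M *ᵥ x := by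
  have := hM.dotProduct_mulVec_nonneg x; rwa [real_star_vec] at this

lemma dot_self_nonneg (v : V → ℝ) : 0 ≤ v ⬝ᵥ v :=
  Finset.sum_nonneg fun i _ => mul_self_nonneg (v i)

lemma dot_self_pos {v : V → ℝ} (hv : v ≠ 0) : 0 < v ⬝ᵥ v :=
  lt_of_le_of_ne (dot_self_nonneg v)
    (fun h => hv (dotProduct_self_eq_zero.mp h.symm))

lemma quad_decomp (A : Matrix V V ℝ) (hA : A.IsHermitian) (v : V → ℝ) :
    v ⬝ᵥ A *ᵥ v = ∑ i, hA.eigenvalues i * ((star (hA.eigenvectorUnitary : Matrix V V ℝ) *ᵥ v) i)^2 ∧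
    v ⬝ᵥ v = ∑ i, ((star (hA.eigenvectorUnitary : Matrix V V ℝ) *ᵥ v) i)^2 := by
  set U : Matrix V V ℝ := (hA.eigenvectorUnitary : Matrix V V ℝ) with hU
  set w : V → ℝ := star U *ᵥ v with hw
  have hUU : U * star U = 1 := (Matrix.mem_unitaryGroup_iff).mp hA.eigenvectorUnitary.2
  have hstar : star U = Uᵀ := by
    rw [Matrix.star_eq_conjTranspose, Matrix.conjTranspose_eq_transpose_of_trivial]
  have hvU : v ᵥ* U = w := by rw [hw, hstar, Matrix.mulVec_transpose]
  have hdiag : Matrix.diagonal (RCLike.ofReal ∘ hA.eigenvalues) =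
      Matrix.diagonal (hA.eigenvalues) := rfl
  constructor
  · conv_lhs => rw [hA.spectral_theorem, Unitary.conjStarAlgAut_apply]
    rw [← Matrix.mulVec_mulVec, ← Matrix.mulVec_mulVec, dotProduct_mulVec, hvU, hdiag,
      ← hU, ← hw, dotProduct]
    refine Finset.sum_congr rfl fun i _ => ?_
    rw [Matrix.mulVec_diagonal]
    ring
  · have : v ⬝ᵥ v = w ⬝ᵥ w := by
      rw [hw, dotProduct_mulVec, hstar, Matrix.vecMul_transpose, ← hstar,
        Matrix.mulVec_mulVec, hUU, Matrix.one_mulVec]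
    rw [this, dotProduct]
    exact Finset.sum_congr rfl fun i _ => by ring

lemma eig_mem_spectrumSet (A : Matrix V V ℝ) (hA : A.IsHermitian) (i : V) :
    hA.eigenvalues i ∈ spectrumSet A := by
  refine ⟨hA.eigenvectorBasis i, ?_, hA.mulVec_eigenvectorBasis i⟩
  intro h0
  have h1 : ‖hA.eigenvectorBasis i‖ = 1 := hA.eigenvectorBasis.orthonormal.1 i
  have : hA.eigenvectorBasis i = 0 := by
    ext j; exact congrFun h0 j
  rw [this, norm_zero] at h1
  exact zero_ne_one h1

lemma lambdaMin_spec [Nonempty V] (A : Matrix V V ℝ) (hA : A.IsHermitian) :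
    (∀ v : V → ℝ, lambdaMin A * (v ⬝ᵥ v) ≤ v ⬝ᵥ A *ᵥ v) ∧ lambdaMin A ∈ spectrumSet A := by
  obtain ⟨i0, -, hi0⟩ := Finset.exists_min_image Finset.univ hA.eigenvalues
    ⟨Classical.arbitrary V, Finset.mem_univ _⟩
  set m := hA.eigenvalues i0 with hm
  have hquad : ∀ v : V → ℝ, m * (v ⬝ᵥ v) ≤ v ⬝ᵥ A *ᵥ v := by
    intro v
    obtain ⟨h1, h2⟩ := quad_decomp A hA v
    rw [h1, h2, Finset.mul_sum]
    exact Finset.sum_le_sum fun i _ =>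
      mul_le_mul_of_nonneg_right (hi0 i (Finset.mem_univ i)) (sq_nonneg _)
  have hmem : m ∈ spectrumSet A := eig_mem_spectrumSet A hA i0
  have hlb : ∀ t ∈ spectrumSet A, m ≤ t := by
    rintro t ⟨x, hx0, hxe⟩
    have hxx : 0 < x ⬝ᵥ x := dot_self_pos hx0
    have h := hquad x
    rw [hxe, dotProduct_smul, smul_eq_mul] at h
    nlinarith
  have hlam : lambdaMin A = m :=
    le_antisymm (csInf_le ⟨m, hlb⟩ hmem) (le_csInf ⟨m, hmem⟩ hlb)
  rw [hlam]
  exact ⟨hquad, hmem⟩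

lemma psdSqrt_spec (M : Matrix V V ℝ) (hM : M.PosSemidef) :
    psdSqrt M * psdSqrt M = M ∧ (psdSqrt M).PosSemidef := by
  have h : psdSqrt M = (hM.1.eigenvectorUnitary : Matrix V V ℝ) *
      Matrix.diagonal (fun i => Real.sqrt (hM.1.eigenvalues i)) *
      (star hM.1.eigenvectorUnitary : Matrix V V ℝ) := by
    unfold psdSqrt
    rw [dif_pos hM]
  rw [h]
  have hs := hM.1.spectral_theorem
  rw [Unitary.conjStarAlgAut_apply] at hs
  set U : Matrix V V ℝ := (hM.1.eigenvectorUnitary : Matrix V V ℝ) with hU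
  have hsU : (star hM.1.eigenvectorUnitary : Matrix V V ℝ) = star U := Unitary.coe_star
  have hUU : star U * U = 1 := Unitary.coe_star_mul_self _
  rw [hsU] at hs ⊢
  set D := Matrix.diagonal (fun i => Real.sqrt (hM.1.eigenvalues i)) with hD
  constructor
  · have hDD : D * D = Matrix.diagonal (RCLike.ofReal ∘ hM.1.eigenvalues) := by
      rw [hD, Matrix.diagonal_mul_diagonal]
      congr 1
      funext i
      simp [Real.mul_self_sqrt (hM.eigenvalues_nonneg i)]
    calc U * D * star U * (U * D * star U) = U * (D * (star U * U) * D) * star U := by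
          simp only [Matrix.mul_assoc]
      _ = M := by rw [hUU, Matrix.mul_one, hDD, ← hs]
  · have := (Matrix.posSemidef_diagonal_iff.mpr
      (fun i => Real.sqrt_nonneg (hM.1.eigenvalues i))).conjTranspose_mul_mul_same (star U)
    simpa only [Matrix.star_eq_conjTranspose, Matrix.conjTranspose_conjTranspose] using this

lemma adj_quad_le (G : SimpleGraph V) [DecidableRel G.Adj] (k : ℕ)
    (hreg : G.IsRegularOfDegree k) (v : V → ℝ) :
    v ⬝ᵥ (G.adjMatrix ℝ) *ᵥ v ≤ k * (v ⬝ᵥ v) := by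
  have hrow : ∀ i, ∑ j, G.adjMatrix ℝ i j = (k : ℝ) := by
    intro i
    have := SimpleGraph.adjMatrix_mulVec_const_apply_of_regular (α := ℝ) (a := 1) hreg (v := i)
    simpa [Matrix.mulVec, dotProduct] using this
  have hlhs : v ⬝ᵥ (G.adjMatrix ℝ) *ᵥ v = ∑ i, ∑ j, G.adjMatrix ℝ i j * (v i * v j) := by
    rw [dotProduct]
    refine Finset.sum_congr rfl fun i _ => ?_
    rw [Matrix.mulVec, dotProduct, Finset.mul_sum]
    exact Finset.sum_congr rfl fun j _ => by ring
  have hbound : ∀ i j, G.adjMatrix ℝ i j * (v i * v j) ≤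
      G.adjMatrix ℝ i j * ((v i)^2 / 2 + (v j)^2 / 2) := by
    intro i j
    refine mul_le_mul_of_nonneg_left ?_ (by simp [SimpleGraph.adjMatrix_apply]; positivity)
    nlinarith [sq_nonneg (v i - v j)]
  calc v ⬝ᵥ (G.adjMatrix ℝ) *ᵥ v
      ≤ ∑ i, ∑ j, G.adjMatrix ℝ i j * ((v i)^2 / 2 + (v j)^2 / 2) := by
        rw [hlhs]
        exact Finset.sum_le_sum fun i _ => Finset.sum_le_sum fun j _ => hbound i j
    _ = (∑ i, ∑ j, G.adjMatrix ℝ i j * ((v i)^2 / 2)) +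
        (∑ i, ∑ j, G.adjMatrix ℝ i j * ((v j)^2 / 2)) := by
        rw [← Finset.sum_add_distrib]
        refine Finset.sum_congr rfl fun i _ => ?_
        rw [← Finset.sum_add_distrib]
        exact Finset.sum_congr rfl fun j _ => by ring
    _ = (k : ℝ) * (v ⬝ᵥ v) := by
        have h1 : ∑ i, ∑ j, G.adjMatrix ℝ i j * ((v i)^2 / 2) = ∑ i, (k:ℝ) * ((v i)^2/2) := by
          refine Finset.sum_congr rfl fun i _ => ?_
          rw [← Finset.sum_mul, hrow]
        have h2 : ∑ i, ∑ j, G.adjMatrix ℝ i j * ((v j)^2 / 2) = ∑ j, (k:ℝ) * ((v j)^2/2) := by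
          rw [Finset.sum_comm]
          refine Finset.sum_congr rfl fun j _ => ?_
          rw [← Finset.sum_mul]
          have : ∑ i, G.adjMatrix ℝ i j = ∑ i, G.adjMatrix ℝ j i := by
            refine Finset.sum_congr rfl fun i _ => ?_
            simp [SimpleGraph.adjMatrix_apply, SimpleGraph.adj_comm]
          rw [this, hrow]
        rw [h1, h2, dotProduct, ← Finset.sum_add_distrib, Finset.mul_sum]
        exact Finset.sum_congr rfl fun i _ => by ring

end HoffmanAux

open Matrix

/-- the Delsarte-Hoffman ratio bound for `k`-regular graphs:
`Υ(A_G,𝟙) = n/(1 − k/τ)` and `α(G) ≤ n/(1 − k/τ)` where `τ = λ_min(A_G)`. -/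
theorem ratio_bound_regular (G : SimpleGraph V) [DecidableRel G.Adj]
    (k : ℕ) (hk : 1 ≤ k) (hreg : G.IsRegularOfDegree k) :
    upsilon (G.adjMatrix ℝ) 1 =
      (Fintype.card V : ℝ) / (1 - (k : ℝ) / lambdaMin (G.adjMatrix ℝ)) ∧
    (stabilityNumber G : ℝ) ≤
      (Fintype.card V : ℝ) / (1 - (k : ℝ) / lambdaMin (G.adjMatrix ℝ)) := by
  
  classical
  obtain hV | hV := isEmpty_or_nonempty V
  · -- Empty vertex set
    have hcard : (Fintype.card V : ℝ) = 0 := by simp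
    have hspec : spectrumSet (G.adjMatrix ℝ) = ∅ := by
      ext t
      simp only [spectrumSet, Set.mem_setOf_eq, Set.mem_empty_iff_false, iff_false, not_exists]
      intro x hx
      exact absurd (funext fun i => isEmptyElim i) (by exact fun h => hx.1 h)
    have hlam : lambdaMin (G.adjMatrix ℝ) = 0 := by
      rw [lambdaMin, hspec, Real.sInf_empty]
    have hrhs : (Fintype.card V : ℝ) / (1 - (k : ℝ) / lambdaMin (G.adjMatrix ℝ)) = 0 := by
      rw [hcard, zero_div]
    rw [hrhs]
    constructor
    · have hU0 : (0 : V → ℝ) ∈ Uset (G.adjMatrix ℝ) := by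
        refine ⟨le_refl _, posSemidef_of_quad _ ?_ fun x => ?_⟩
        · ext i j; exact isEmptyElim i
        · simp [dotProduct]
      have hset : {r : ℝ | ∃ x ∈ Uset (G.adjMatrix ℝ), r = ip 1 x} = {0} := by
        ext r
        constructor
        · rintro ⟨x, -, rfl⟩; simp [ip]
        · rintro rfl; exact ⟨0, hU0, by simp [ip]⟩
      unfold upsilon
      rw [hset, csSup_singleton]
    · have hstab : stabilityNumber G = 0 := by
        have hset : {m : ℕ | ∃ S : Finset V, IsStableSet G S ∧ S.card = m} = {0} := by
          ext m
          constructor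
          · rintro ⟨S, -, rfl⟩
            have h1 : Fintype.card V = 0 := Fintype.card_eq_zero
            have h2 := Finset.card_le_univ S
            simp only [Finset.card_univ, h1, Nat.le_zero] at h2
            simp [h2]
          · rintro rfl
            exact ⟨∅, fun i hi => absurd hi (Finset.notMem_empty i), Finset.card_empty⟩
        unfold stabilityNumber
        rw [hset, csSup_singleton]
      rw [hstab]; norm_num
  · -- Nonempty vertex set
    set A := G.adjMatrix ℝ with hAdef
    have hAT : Aᵀ = A := by rw [hAdef]; simp
    have hAH : A.IsHermitian := isHermitian_of_transpose hAT
    obtain ⟨hquadτ, hτmem⟩ := lambdaMin_spec A hAH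
    set τ := lambdaMin A with hτdef
    obtain ⟨i₀, j₀, hadj⟩ : ∃ i j, G.Adj i j := by
      obtain ⟨i⟩ := hV
      have : (G.neighborFinset i).Nonempty := Finset.card_pos.mp
        (by rw [SimpleGraph.card_neighborFinset_eq_degree, hreg i]; omega)
      obtain ⟨j, hj⟩ := this
      rw [SimpleGraph.mem_neighborFinset] at hj
      exact ⟨i, j, hj⟩
    have hij : i₀ ≠ j₀ := hadj.ne
    have hAvals : A i₀ i₀ = 0 ∧ A j₀ j₀ = 0 ∧ A i₀ j₀ = 1 ∧ A j₀ i₀ = 1 := by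
      refine ⟨?_, ?_, ?_, ?_⟩ <;> simp [hAdef, SimpleGraph.adjMatrix_apply, hadj, hadj.symm]
    have hτle : τ ≤ -1 := by
      set v : V → ℝ := fun m => (if m = i₀ then (1:ℝ) else 0) - (if m = j₀ then 1 else 0) with hv
      have hAv : ∀ l, (A *ᵥ v) l = A l i₀ - A l j₀ := by
        intro l
        simp [Matrix.mulVec, dotProduct, hv, mul_sub, Finset.sum_sub_distrib,
          mul_ite, mul_one, mul_zero]
      have hquadv : v ⬝ᵥ A *ᵥ v = -2 := by
        have h1 : v ⬝ᵥ A *ᵥ v = (A *ᵥ v) i₀ - (A *ᵥ v) j₀ := by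
          simp [dotProduct, hv, sub_mul, Finset.sum_sub_distrib, ite_mul, one_mul,
            zero_mul]
        rw [h1, hAv i₀, hAv j₀, hAvals.1, hAvals.2.1, hAvals.2.2.1, hAvals.2.2.2]
        norm_num
      have hvv : v ⬝ᵥ v = 2 := by
        have h1 : v ⬝ᵥ v = v i₀ - v j₀ := by
          simp [dotProduct, hv, sub_mul, Finset.sum_sub_distrib, ite_mul, one_mul,
            zero_mul]
        rw [h1]
        simp [hv, hij, hij.symm]
        norm_num
      have h := hquadτ v
      rw [hquadv, hvv] at h
      linarith
    have hτneg : τ < 0 := lt_of_le_of_lt hτle (by norm_num)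
    have hτne : τ ≠ 0 := ne_of_lt hτneg
    set σ := (-τ)⁻¹ with hσdef
    have hσpos : 0 < σ := inv_pos.mpr (by linarith)
    have hστ : σ * τ = -1 := by
      rw [hσdef]
      field_simp
    have hA0 : A ≠ 0 := by
      intro h
      have h1 := hAvals.2.2.1
      rw [h] at h1
      simpa using h1
    have hhat : hatM A = σ • A := by rw [hatM, if_neg hA0]
    set M := (1 : Matrix V V ℝ) + hatM A with hMdef
    have hMT : Mᵀ = M := by
      rw [hMdef, hhat, Matrix.transpose_add, Matrix.transpose_one, Matrix.transpose_smul, hAT]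
    have hMH : M.IsHermitian := isHermitian_of_transpose hMT
    have quadM : ∀ v : V → ℝ, v ⬝ᵥ M *ᵥ v = v ⬝ᵥ v + σ * (v ⬝ᵥ A *ᵥ v) := by
      intro v
      rw [hMdef, hhat, Matrix.add_mulVec, Matrix.one_mulVec, dotProduct_add,
        Matrix.smul_mulVec, dotProduct_smul, smul_eq_mul]
    set n := (Fintype.card V : ℝ) with hndef
    set c := 1 - (k : ℝ) / τ with hcdef
    have hck : c = 1 + σ * k := by
      rw [hcdef, hσdef, inv_neg, div_eq_mul_inv]
      ring
    have hk1 : (1 : ℝ) ≤ k := by exact_mod_cast hk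
    have hc1 : 1 < c := by nlinarith
    have hcpos : 0 < c := by linarith
    have hMpsd : M.PosSemidef := by
      refine posSemidef_of_quad M hMH fun v => ?_
      have h1 := hquadτ v
      have h2 := dot_self_nonneg v
      have h3 : σ * (τ * (v ⬝ᵥ v)) ≤ σ * (v ⬝ᵥ A *ᵥ v) := mul_le_mul_of_nonneg_left h1 hσpos.le
      rw [quadM v]
      nlinarith
    obtain ⟨hSsq, hSpsd⟩ := psdSqrt_spec M hMpsd
    set S := psdSqrt M with hSdef
    have hSsymm : Sᵀ = S := by
      have h := hSpsd.1
      rwa [Matrix.IsHermitian, Matrix.conjTranspose_eq_transpose_of_trivial] at h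
    have hA1 : A *ᵥ (fun _ => (1:ℝ)) = fun _ => (k : ℝ) := by
      funext i
      rw [hAdef, SimpleGraph.adjMatrix_mulVec_apply]
      simp [SimpleGraph.card_neighborFinset_eq_degree, hreg i]
    have hM1 : M *ᵥ (fun _ => (1:ℝ)) = fun _ => c := by
      funext i
      rw [hMdef, hhat, Matrix.add_mulVec, Matrix.one_mulVec, Matrix.smul_mulVec, hA1]
      simp [hck]
    set s := Real.sqrt c with hsdef
    have hs2 : s * s = c := Real.mul_self_sqrt hcpos.le
    have hspos : 0 < s := Real.sqrt_pos.mpr hcpos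
    have hS1 : S *ᵥ (fun _ => (1:ℝ)) = fun _ => s := by
      set w : V → ℝ := (S *ᵥ fun _ => (1:ℝ)) - (fun _ => s) with hw
      have hSw : S *ᵥ w = (-s) • w := by
        rw [hw, Matrix.mulVec_sub]
        have h1 : S *ᵥ (S *ᵥ fun _ => (1:ℝ)) = fun _ => c := by
          rw [Matrix.mulVec_mulVec, hSsq, hM1]
        have hconst : (fun _ : V => s) = s • (fun _ : V => (1:ℝ)) := by
          funext i; simp
        rw [h1, hconst, Matrix.mulVec_smul]
        funext l
        simp only [Pi.sub_apply, Pi.smul_apply, smul_eq_mul]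
        rw [← hs2]
        ring
      have h0 : 0 ≤ w ⬝ᵥ S *ᵥ w := quad_nonneg_of_posSemidef hSpsd w
      rw [hSw, dotProduct_smul, smul_eq_mul] at h0
      have hww0 : w ⬝ᵥ w ≤ 0 := by nlinarith
      have hw0 : w = 0 := dotProduct_self_eq_zero.mp
        (le_antisymm hww0 (dot_self_nonneg w))
      rw [hw] at hw0
      exact sub_eq_zero.mp hw0
    have hquadc : ∀ v : V → ℝ, v ⬝ᵥ M *ᵥ v ≤ c * (v ⬝ᵥ v) := by
      intro v
      rw [quadM v, hck]
      have h1 := adj_quad_le G k hreg v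
      have h2 := dot_self_nonneg v
      have h3 : σ * (v ⬝ᵥ A *ᵥ v) ≤ σ * ((k:ℝ) * (v ⬝ᵥ v)) :=
        mul_le_mul_of_nonneg_left h1 hσpos.le
      nlinarith
    have hub : ∀ r ∈ {r : ℝ | ∃ x ∈ Uset A, r = ip 1 x}, r ≤ n / c := by
      rintro r ⟨x, ⟨hx0, hxP⟩, rfl⟩
      have h0 := quad_nonneg_of_posSemidef hxP (fun _ => (1:ℝ))
      rw [Matrix.sub_mulVec, dotProduct_sub, Matrix.one_mulVec] at h0
      have hone : (fun _ : V => (1:ℝ)) ⬝ᵥ (fun _ : V => (1:ℝ)) = n := by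
        simp [dotProduct, hndef]
      have hmid : (fun _ => (1:ℝ)) ⬝ᵥ (S * Matrix.diagonal x * S) *ᵥ (fun _ => (1:ℝ))
          = c * ip 1 x := by
        rw [← Matrix.mulVec_mulVec, ← Matrix.mulVec_mulVec, dotProduct_mulVec]
        have hv1 : (fun _ => (1:ℝ)) ᵥ* S = fun _ => s := by
          rw [← hSsymm, Matrix.vecMul_transpose, hS1]
        rw [hv1, hS1]
        simp only [dotProduct, Matrix.mulVec_diagonal, ip, Pi.one_apply, one_mul]
        rw [← hs2, Finset.mul_sum]
        exact Finset.sum_congr rfl fun i _ => by ring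
      rw [hone, hmid] at h0
      rw [le_div_iff₀ hcpos]
      linarith
    have hmem : n / c ∈ {r : ℝ | ∃ x ∈ Uset A, r = ip 1 x} := by
      refine ⟨fun _ => c⁻¹, ⟨fun i => by positivity, ?_⟩, ?_⟩
      · have hdiag : Matrix.diagonal (fun _ : V => c⁻¹) = c⁻¹ • (1 : Matrix V V ℝ) := by
          ext i j
          by_cases hij2 : i = j <;>
            simp [Matrix.diagonal_apply, Matrix.one_apply, hij2]
        rw [hdiag]
        have heq : S * (c⁻¹ • (1 : Matrix V V ℝ)) * S = c⁻¹ • M := by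
          rw [Matrix.mul_smul, Matrix.mul_one, Matrix.smul_mul, hSsq]
        rw [heq]
        refine posSemidef_of_quad _ ?_ fun v => ?_
        · refine isHermitian_of_transpose ?_
          rw [Matrix.transpose_sub, Matrix.transpose_one, Matrix.transpose_smul, hMT]
        · rw [Matrix.sub_mulVec, dotProduct_sub, Matrix.one_mulVec,
            Matrix.smul_mulVec, dotProduct_smul, smul_eq_mul]
          have h1 := hquadc v
          have hcinv : 0 < c⁻¹ := inv_pos.mpr hcpos
          have h2 : c⁻¹ * (v ⬝ᵥ M *ᵥ v) ≤ c⁻¹ * (c * (v ⬝ᵥ v)) :=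
            mul_le_mul_of_nonneg_left h1 hcinv.le
          rw [← mul_assoc, inv_mul_cancel₀ (ne_of_gt hcpos), one_mul] at h2
          linarith
      · simp only [ip, Pi.one_apply, one_mul, Finset.sum_const, Finset.card_univ,
          nsmul_eq_mul, hndef]
        rw [div_eq_mul_inv]
    have hsup : sSup {r : ℝ | ∃ x ∈ Uset A, r = ip 1 x} = n / c :=
      le_antisymm (csSup_le ⟨n / c, hmem⟩ hub) (le_csSup ⟨n / c, hub⟩ hmem)
    have hupsilon : upsilon A 1 = n / c := by unfold upsilon; exact hsup
    refine ⟨hupsilon, ?_⟩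
    have hstabset : ∀ T : Finset V, IsStableSet G T → (T.card : ℝ) ≤ n / c := by
      intro T hT
      set x : V → ℝ := fun i => if i ∈ T then 1 else 0 with hx
      set D := Matrix.diagonal x with hD
      have hDMD : D * M * D = D := by
        ext i j
        rw [hD, Matrix.mul_diagonal, Matrix.diagonal_mul, Matrix.diagonal_apply]
        have hMval : M i j = (if i = j then (1:ℝ) else 0) + σ * A i j := by
          rw [hMdef, hhat]
          simp [Matrix.add_apply, Matrix.one_apply, Matrix.smul_apply]
        rw [hMval]
        by_cases hij2 : i = j
        · subst hij2
          have hAii : A i i = 0 := by simp [hAdef]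
          by_cases hiT : i ∈ T <;> simp [hAii, hx, hiT]
        · simp only [if_neg hij2]
          by_cases hiT : i ∈ T
          · by_cases hjT : j ∈ T
            · have hAij : A i j = 0 := by
                simp [hAdef, SimpleGraph.adjMatrix_apply, hT i hiT j hjT]
              simp [hAij]
            · simp [hx, hjT]
          · simp [hx, hiT]
      set Q := S * D * S with hQ
      have hQ2 : Q * Q = Q := by
        have h1 : Q * Q = S * (D * (S * S) * D) * S := by rw [hQ]; noncomm_ring
        rw [h1, hSsq, hDMD, hQ]
      have hQsymm : Qᵀ = Q := by
        rw [hQ, Matrix.transpose_mul, Matrix.transpose_mul, hSsymm, hD,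
          Matrix.diagonal_transpose, ← Matrix.mul_assoc, ← hD]
      have hpsd : ((1 : Matrix V V ℝ) - Q).PosSemidef := by
        have h1 : ((1 : Matrix V V ℝ) - Q)ᴴ * (1 - Q) = 1 - Q := by
          rw [Matrix.conjTranspose_eq_transpose_of_trivial, Matrix.transpose_sub,
            Matrix.transpose_one, hQsymm]
          have h2 : ((1 : Matrix V V ℝ) - Q) * (1 - Q) = 1 - Q - Q + Q * Q := by noncomm_ring
          rw [h2, hQ2]
          abel
        have h3 := Matrix.posSemidef_conjTranspose_mul_self ((1 : Matrix V V ℝ) - Q)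
        rwa [h1] at h3
      have hxmem : x ∈ Uset A := by
        refine ⟨fun i => ?_, ?_⟩
        · rw [hx]; dsimp only; split <;> norm_num
        · exact hpsd
      have hcard : ip 1 x = T.card := by
        rw [ip]
        simp only [Pi.one_apply, one_mul, hx]
        rw [Finset.sum_ite_mem, Finset.univ_inter]
        simp
      have hmem2 : (T.card : ℝ) ∈ {r : ℝ | ∃ x ∈ Uset A, r = ip 1 x} :=
        ⟨x, hxmem, hcard.symm⟩
      calc (T.card : ℝ) ≤ sSup {r : ℝ | ∃ x ∈ Uset A, r = ip 1 x} :=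
            le_csSup ⟨n / c, hub⟩ hmem2
        _ = n / c := hsup
    have hex : ∃ T : Finset V, IsStableSet G T ∧ T.card = stabilityNumber G := by
      have h0 : 0 ∈ {m : ℕ | ∃ T : Finset V, IsStableSet G T ∧ T.card = m} :=
        ⟨∅, fun i hi => absurd hi (Finset.notMem_empty i), Finset.card_empty⟩
      have hbdd : BddAbove {m : ℕ | ∃ T : Finset V, IsStableSet G T ∧ T.card = m} := by
        refine ⟨Fintype.card V, ?_⟩
        rintro m ⟨T, -, rfl⟩
        simpa using Finset.card_le_univ T
      have h1 := Nat.sSup_mem ⟨0, h0⟩ hbdd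
      exact h1
    obtain ⟨T, hT, hTcard⟩ := hex
    rw [← hTcard]
    exact hstabset T hT
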